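/- arXiv:2301.08599 — 3 statements merged into one kernel-verified Lean document; each statement's English description precedes it below -/
import Mathlib

section
/- Let X be a connected topological space and U a dense subset of X. Suppose that for every point x in X there exists a neighborhood U_x of x such that U ∩ U_x is connected. Then U is connected. -/
/-- Let `X` be a connected topological space and `U` a dense subset. If every point of `X`
has a neighborhood `s` such that `U ∩ s` is connected, then `U` is connected. -/
theorem dense_connected_of_locally_connected_inter
    {X : Type*} [TopologicalSpace X] [ConnectedSpace X]
    (U : Set X) (hU : Dense U)
    (h : ∀ x : X, ∃ s ∈ nhds x, IsConnected (U ∩ s)) :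
    IsConnected U := by
  refine ⟨hU.nonempty, ?_⟩
  intro v w hv hw hsub hv' hw'
  by_contra hvw
  -- density gives nonempty intersection with neighborhoods
  have hden : ∀ (x : X) (s : Set X), s ∈ nhds x → (U ∩ s).Nonempty := by
    intro x s hs
    rcases mem_nhds_iff.mp hs with ⟨t, hts, hto, hxt⟩
    rcases hU.inter_open_nonempty t hto ⟨x, hxt⟩ with ⟨u, hu⟩
    exact ⟨u, hu.2, hts hu.1⟩
  -- each connected piece lies in v or in w
  have hpiece : ∀ s : Set X, IsConnected (U ∩ s) → U ∩ s ⊆ v ∨ U ∩ s ⊆ w := by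
    intro s hc
    by_contra hcon
    push_neg at hcon
    rw [Set.not_subset, Set.not_subset] at hcon
    obtain ⟨⟨a, ha, hav⟩, ⟨b, hb, hbw⟩⟩ := hcon
    have hav' : a ∈ w := by
      rcases hsub ha.1 with h1 | h1
      · exact absurd h1 hav
      · exact h1
    have hbw' : b ∈ v := by
      rcases hsub hb.1 with h1 | h1
      · exact h1
      · exact absurd h1 hbw
    have := hc.isPreconnected v w hv hw (fun x hx => hsub hx.1)
      ⟨b, hb, hbw'⟩ ⟨a, ha, hav'⟩
    rcases this with ⟨c, hc1, hc2⟩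
    exact hvw ⟨c, hc1.1, hc2⟩
  set A := {x : X | ∃ s ∈ nhds x, IsConnected (U ∩ s) ∧ U ∩ s ⊆ v} with hA
  set B := {x : X | ∃ s ∈ nhds x, IsConnected (U ∩ s) ∧ U ∩ s ⊆ w} with hB
  have hAopen : IsOpen A := by
    rw [isOpen_iff_mem_nhds]
    intro x ⟨s, hs, hc, hsv⟩
    rcases mem_nhds_iff.mp hs with ⟨t, hts, hto, hxt⟩
    refine Filter.mem_of_superset (hto.mem_nhds hxt) ?_
    intro y hy
    rcases h y with ⟨s', hs', hc'⟩
    have hsy : s ∈ nhds y := Filter.mem_of_superset (hto.mem_nhds hy) hts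
    rcases hden y (s ∩ s') (Filter.inter_mem hsy hs') with ⟨u, hu1, hu2, hu3⟩
    have huv : u ∈ v := hsv ⟨hu1, hu2⟩
    rcases hpiece s' hc' with hh | hh
    · exact ⟨s', hs', hc', hh⟩
    · exact absurd ⟨hu1, huv, hh ⟨hu1, hu3⟩⟩ (fun hx => hvw ⟨u, hx⟩)
  have hBopen : IsOpen B := by
    rw [isOpen_iff_mem_nhds]
    intro x ⟨s, hs, hc, hsw⟩
    rcases mem_nhds_iff.mp hs with ⟨t, hts, hto, hxt⟩
    refine Filter.mem_of_superset (hto.mem_nhds hxt) ?_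
    intro y hy
    rcases h y with ⟨s', hs', hc'⟩
    have hsy : s ∈ nhds y := Filter.mem_of_superset (hto.mem_nhds hy) hts
    rcases hden y (s ∩ s') (Filter.inter_mem hsy hs') with ⟨u, hu1, hu2, hu3⟩
    have huw : u ∈ w := hsw ⟨hu1, hu2⟩
    rcases hpiece s' hc' with hh | hh
    · exact absurd ⟨hu1, hh ⟨hu1, hu3⟩, huw⟩ (fun hx => hvw ⟨u, hx⟩)
    · exact ⟨s', hs', hc', hh⟩
  have hcover : (Set.univ : Set X) ⊆ A ∪ B := by
    intro x _
    rcases h x with ⟨s, hs, hc⟩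
    rcases hpiece s hc with hh | hh
    · exact Or.inl ⟨s, hs, hc, hh⟩
    · exact Or.inr ⟨s, hs, hc, hh⟩
  have hAne : (Set.univ ∩ A).Nonempty := by
    rcases hv' with ⟨a, haU, hav⟩
    rcases h a with ⟨s, hs, hc⟩
    have has : a ∈ s := mem_of_mem_nhds hs
    rcases hpiece s hc with hh | hh
    · exact ⟨a, trivial, s, hs, hc, hh⟩
    · exact absurd ⟨haU, hav, hh ⟨haU, has⟩⟩ (fun hx => hvw ⟨a, hx⟩)
  have hBne : (Set.univ ∩ B).Nonempty := by
    rcases hw' with ⟨a, haU, haw⟩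
    rcases h a with ⟨s, hs, hc⟩
    have has : a ∈ s := mem_of_mem_nhds hs
    rcases hpiece s hc with hh | hh
    · exact absurd ⟨haU, hh ⟨haU, has⟩, haw⟩ (fun hx => hvw ⟨a, hx⟩)
    · exact ⟨a, trivial, s, hs, hc, hh⟩
  rcases isPreconnected_univ A B hAopen hBopen hcover hAne hBne with ⟨x, _, hxA, hxB⟩
  rcases hxA with ⟨s, hs, _, hsv⟩
  rcases hxB with ⟨s', hs', _, hsw⟩
  rcases hden x (s ∩ s') (Filter.inter_mem hs hs') with ⟨u, hu1, hu2, hu3⟩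
  exact hvw ⟨u, hu1, hsv ⟨hu1, hu2⟩, hsw ⟨hu1, hu3⟩⟩
end

section
/- Let u be a diagonalizable endomorphism of a finite-dimensional vector space V over ℝ (or ℂ) with all eigenvalues real, and let W ⊆ V be a subspace stable under exp(u). Then W is stable under u. -/
open scoped Matrix

open Polynomial Matrix

/-- A subspace stable under `mulVec E` is stable under `mulVec` of any polynomial in `E`. -/
lemma aeval_mulVec_mem {n : ℕ} (E : Matrix (Fin n) (Fin n) ℝ)
    (W : Submodule ℝ (Fin n → ℝ)) (hW : ∀ v ∈ W, E.mulVec v ∈ W)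
    (q : Polynomial ℝ) : ∀ v ∈ W, ((Polynomial.aeval E) q).mulVec v ∈ W := by
  have hpow : ∀ (k : ℕ) (v), v ∈ W → (E ^ k).mulVec v ∈ W := by
    intro k
    induction k with
    | zero => intro v hv; simpa using hv
    | succ k ih =>
      intro v hv
      rw [pow_succ', ← Matrix.mulVec_mulVec]
      exact hW _ (ih v hv)
  induction q using Polynomial.induction_on' with
  | add p q hp hq =>
    intro v hv
    rw [map_add, Matrix.add_mulVec]
    exact W.add_mem (hp v hv) (hq v hv)
  | monomial k a =>
    intro v hv
    rw [Polynomial.aeval_monomial]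
    have : (algebraMap ℝ (Matrix (Fin n) (Fin n) ℝ)) a * E ^ k = a • E ^ k := by
      rw [Algebra.algebraMap_eq_smul_one, smul_mul_assoc, one_mul]
    rw [this, Matrix.smul_mulVec]
    exact W.smul_mem _ (hpow k v hv)

/-- If `A` is a diagonalizable real matrix (with real eigenvalues) and `W` is a subspace
stable under `exp A`, then `W` is stable under `A`. -/
theorem subspace_stable_of_exp_stable
    {n : ℕ} (A : Matrix (Fin n) (Fin n) ℝ)
    (hdiag : ∃ (b : Module.Basis (Fin n) ℝ (Fin n → ℝ)) (μ : Fin n → ℝ),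
      ∀ i, A.mulVec (b i) = μ i • b i)
    (W : Submodule ℝ (Fin n → ℝ))
    (hW : ∀ v ∈ W, (NormedSpace.exp A).mulVec v ∈ W) :
    ∀ v ∈ W, A.mulVec v ∈ W := by
  classical
  obtain ⟨b, μ, hb⟩ := hdiag
  set e := Pi.basisFun ℝ (Fin n) with he
  set P : Matrix (Fin n) (Fin n) ℝ := e.toMatrix b with hP
  haveI : Invertible P := e.invertibleToMatrix b
  have hPentry : ∀ i j, P i j = b j i := by
    intro i j
    rw [hP, Module.Basis.toMatrix_apply, he, Pi.basisFun_repr]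
  -- `A * P = P * diagonal μ`
  have hAP : A * P = P * Matrix.diagonal μ := by
    ext i j
    have h1 : (A * P) i j = A.mulVec (b j) i := by
      simp [Matrix.mul_apply, Matrix.mulVec, dotProduct, hPentry]
    have h2 : (P * Matrix.diagonal μ) i j = μ j * b j i := by
      rw [Matrix.mul_diagonal, hPentry, mul_comm]
    rw [h1, h2, hb j]
    simp [mul_comm]
  have hA : A = P * Matrix.diagonal μ * ⅟P := by
    rw [← hAP, Matrix.mul_assoc, mul_invOf_self, Matrix.mul_one]
  -- exponential of A
  have hPinv : (⅟P : Matrix (Fin n) (Fin n) ℝ) = P⁻¹ := Matrix.invOf_eq_nonsing_inv P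
  have hexpA : NormedSpace.exp A
      = P * Matrix.diagonal (fun i => Real.exp (μ i)) * ⅟P := by
    rw [hA, hPinv, Matrix.exp_conj P (Matrix.diagonal μ) (isUnit_of_invertible P),
      Matrix.exp_diagonal]
    congr 2
    ext i
    rw [Pi.exp_def]
    simp [← Real.exp_eq_exp_ℝ]
  -- eigenvectors of exp A
  have hPsingle : ∀ i, P.mulVec (Pi.single i 1) = b i := by
    intro i
    ext k
    simp [Matrix.mulVec_single, hPentry]
  have hPinvb : ∀ i, (⅟P : Matrix (Fin n) (Fin n) ℝ).mulVec (b i) = Pi.single i 1 := by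
    intro i
    rw [← hPsingle i, Matrix.mulVec_mulVec, invOf_mul_self, Matrix.one_mulVec]
  have hEb : ∀ i, (NormedSpace.exp A).mulVec (b i) = Real.exp (μ i) • b i := by
    intro i
    rw [hexpA, ← Matrix.mulVec_mulVec, hPinvb i, ← Matrix.mulVec_mulVec]
    have : (Matrix.diagonal (fun i => Real.exp (μ i))).mulVec (Pi.single i 1)
        = Real.exp (μ i) • (Pi.single i 1 : Fin n → ℝ) := by
      ext k
      rcases eq_or_ne k i with rfl | hk
      · simp [Matrix.mulVec_single]
      · simp [Matrix.mulVec_single, hk]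
    rw [this, Matrix.mulVec_smul, hPsingle i]
  -- powers of exp A on eigenvectors
  have hEpow : ∀ (k : ℕ) (i),
      ((NormedSpace.exp A) ^ k).mulVec (b i) = Real.exp (μ i) ^ k • b i := by
    intro k
    induction k with
    | zero => intro i; simp
    | succ k ih =>
      intro i
      rw [pow_succ', ← Matrix.mulVec_mulVec, ih i, Matrix.mulVec_smul, hEb i,
        smul_smul, pow_succ', mul_comm]
  -- polynomial with p(exp(μ i)) = μ i
  set s : Finset ℝ := Finset.image (fun i => Real.exp (μ i)) Finset.univ with hs
  set p : Polynomial ℝ := Lagrange.interpolate s id Real.log with hp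
  have hpeval : ∀ i, p.eval (Real.exp (μ i)) = μ i := by
    intro i
    have hmem : Real.exp (μ i) ∈ s := by
      rw [hs]; exact Finset.mem_image_of_mem _ (Finset.mem_univ i)
    have := Lagrange.eval_interpolate_at_node Real.log
      (Set.injOn_id (s : Set ℝ)) hmem
    simpa [hp, Real.log_exp] using this
  -- aeval (exp A) p on eigenvectors
  have haevalb : ∀ i,
      ((Polynomial.aeval (NormedSpace.exp A)) p).mulVec (b i) = μ i • b i := by
    intro i
    have key : ∀ q : Polynomial ℝ,
        ((Polynomial.aeval (NormedSpace.exp A)) q).mulVec (b i)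
        = q.eval (Real.exp (μ i)) • b i := by
      intro q
      induction q using Polynomial.induction_on' with
      | add q r hq hr =>
        rw [map_add, Matrix.add_mulVec, hq, hr, Polynomial.eval_add, add_smul]
      | monomial k a =>
        rw [Polynomial.aeval_monomial]
        have h1 : (algebraMap ℝ (Matrix (Fin n) (Fin n) ℝ)) a * (NormedSpace.exp A) ^ k
            = a • (NormedSpace.exp A) ^ k := by
          rw [Algebra.algebraMap_eq_smul_one, smul_mul_assoc, one_mul]
        rw [h1, Matrix.smul_mulVec, hEpow k i, Polynomial.eval_monomial,
          smul_smul]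
    rw [key p, hpeval i]
  -- A acts like aeval (exp A) p
  have hAeq : ∀ v, A.mulVec v
      = ((Polynomial.aeval (NormedSpace.exp A)) p).mulVec v := by
    have : A.mulVecLin = ((Polynomial.aeval (NormedSpace.exp A)) p).mulVecLin := by
      apply b.ext
      intro i
      rw [Matrix.mulVecLin_apply, Matrix.mulVecLin_apply, hb i, haevalb i]
    intro v
    have := congrArg (fun f => f v) this
    simpa using this
  intro v hv
  rw [hAeq v]
  exact aeval_mulVec_mem (NormedSpace.exp A) W hW p v hv
end

section
/- Let G be a compact Lie group acting smoothly and linearly by orthogonal transformations on a finite-dimensional real inner product space V, and fix v ∈ V. If w minimizes the distance to v among points of a G-orbit 𝒪, then w ∈ E_v^⊥, where E_v = {X • v : X ∈ 𝔤}. In particular, the subspace E_v^⊥ meets every G-orbit. -/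
open scoped RealInnerProductSpace

/-- A point of an orbit minimizing the distance to `v` lies in the orthogonal complement of
the tangent space `E v` to the orbit of `v`; in particular `(E v)ᗮ` meets every orbit. -/
theorem minimizer_mem_orthocomplement
    {G V : Type*} [Group G] [TopologicalSpace G] [IsTopologicalGroup G] [CompactSpace G]
    [NormedAddCommGroup V] [InnerProductSpace ℝ V] [FiniteDimensional ℝ V]
    [DistribMulAction G V] [SMulCommClass G ℝ V] [ContinuousSMul G V]
    (horth : ∀ (g : G) (x y : V), ⟪g • x, g • y⟫ = ⟪x, y⟫)
    (𝔤 : Set (V →ₗ[ℝ] V))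
    (hskew : ∀ X ∈ 𝔤, ∀ x y : V, ⟪X x, y⟫ = -⟪x, X y⟫)
    (hflow : ∀ X ∈ 𝔤, ∃ c : ℝ → G, c 0 = 1 ∧
      ∀ (x : V) (t : ℝ), HasDerivAt (fun s : ℝ => c s • x) (X (c t • x)) t)
    (v : V) (E : Submodule ℝ V)
    (hE : E = Submodule.span ℝ {w : V | ∃ X ∈ 𝔤, X v = w}) :
    (∀ u : V, ∀ w ∈ MulAction.orbit G u,
      (∀ w' ∈ MulAction.orbit G u, dist v w ≤ dist v w') → w ∈ Eᗮ) ∧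
    (∀ u : V, ∃ w ∈ MulAction.orbit G u, w ∈ Eᗮ) := by
  have main : ∀ u : V, ∀ w ∈ MulAction.orbit G u,
      (∀ w' ∈ MulAction.orbit G u, dist v w ≤ dist v w') → w ∈ Eᗮ := by
    intro u w hw hmin
    -- Key: for every X ∈ 𝔤, ⟪X v, w⟫ = 0.
    have key : ∀ X ∈ 𝔤, ⟪X v, w⟫ = 0 := by
      intro X hX
      obtain ⟨c, hc0, hcd⟩ := hflow X hX
      -- f t = ‖v - c t • w‖²   has a minimum at t = 0
      set f : ℝ → ℝ := fun t => ⟪v - c t • w, v - c t • w⟫ with hf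
      have horb : ∀ t : ℝ, c t • w ∈ MulAction.orbit G u := by
        intro t
        obtain ⟨g, hg⟩ := hw
        exact ⟨c t * g, by show (c t * g) • u = c t • w; rw [mul_smul]; exact congrArg _ hg⟩
      have hmin' : IsLocalMin f 0 := by
        have hmo : IsMinOn f Set.univ 0 := by
          rw [isMinOn_iff]
          intro t _
          have h1 : dist v w ≤ dist v (c t • w) := hmin _ (horb t)
          have h2 : c 0 • w = w := by rw [hc0, one_smul]
          simp only [f, real_inner_self_eq_norm_sq, ← dist_eq_norm, h2]
          exact pow_le_pow_left₀ dist_nonneg h1 2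
        exact hmo.isLocalMin Filter.univ_mem
      have hderiv : HasDerivAt f
          (⟪v - c 0 • w, -(X (c 0 • w))⟫ + ⟪-(X (c 0 • w)), v - c 0 • w⟫) 0 := by
        have hg : HasDerivAt (fun t : ℝ => v - c t • w) (-(X (c 0 • w))) 0 := by
          have := (hasDerivAt_const 0 v).sub (hcd w 0)
          rwa [zero_sub] at this
        exact hg.inner ℝ hg
      have hz := hmin'.hasDerivAt_eq_zero hderiv
      have h2 : c 0 • w = w := by rw [hc0, one_smul]
      rw [h2] at hz
      have hz' : ⟪X w, v - w⟫ = 0 := by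
        rw [real_inner_comm] at hz
        simp only [inner_neg_left, inner_neg_right] at hz
        linarith
      have hww : ⟪X w, w⟫ = 0 := by
        have h1 := hskew X hX w w
        have h2 := real_inner_comm w (X w)
        linarith
      have hwv : ⟪X w, v⟫ = 0 := by
        rw [inner_sub_right] at hz'; linarith
      have h1 := hskew X hX v w
      have h2 := real_inner_comm v (X w)
      linarith
    -- conclude membership in Eᗮ
    rw [Submodule.mem_orthogonal]
    intro x hx
    rw [hE] at hx
    induction hx using Submodule.span_induction with
    | mem x hx => obtain ⟨X, hX, rfl⟩ := hx; exact key X hX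
    | zero => simp
    | add x y _ _ hx hy => rw [inner_add_left, hx, hy, add_zero]
    | smul a x _ hx => rw [real_inner_smul_left, hx, mul_zero]
  refine ⟨main, fun u => ?_⟩
  have hcomp : IsCompact (MulAction.orbit G u) := by
    have : MulAction.orbit G u = Set.range (fun g : G => g • u) := rfl
    rw [this]
    exact isCompact_range (continuous_id.smul continuous_const)
  obtain ⟨w, hw, hmin⟩ := hcomp.exists_isMinOn (MulAction.nonempty_orbit u)
    (continuous_const.dist continuous_id).continuousOn
  exact ⟨w, hw, main u w hw fun w' hw' => hmin hw'⟩
end
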